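/- arXiv:2505.16051 — 3 statements merged into one kernel-verified Lean document; each statement's English description precedes it below -/
import Mathlib

section
/- Let (Ω, ℱ, P) be a probability space, let Y : Ω → ℝ^m and U : Ω → ℝ^d be random vectors with E‖U‖² < ∞, and let v : ℝ^m → ℝ^d be a measurable function with E‖v(Y)‖² < ∞. Let E[U | Y] denote the conditional expectation of U given the σ-algebra generated by Y. Then E‖v(Y) − U‖² = E‖v(Y) − E[U | Y]‖² + E‖U − E[U | Y]‖². In particular, the 'flow matching' objective v ↦ E‖v(Y) − E[U | Y]‖² and the 'conditional flow matching' objective v ↦ E‖v(Y) − U‖² differ by the constant E‖U − E[U | Y]‖², which is independent of v. -/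
open MeasureTheory
open scoped InnerProductSpace

/-! In `L²(μ)` the conditional expectation `μ[U|m]` is the orthogonal projection of `U` onto the
subspace of `m`-measurable functions, so `U - μ[U|m]` is orthogonal to every `m`-measurable
`L²` function, in particular to `v ∘ Y - μ[U|σ(Y)]`. Writing `v ∘ Y - U` as the difference of
these two orthogonal vectors, the identity is Pythagoras' theorem in `L²(μ)`. -/

section

variable {Ω E : Type*} [NormedAddCommGroup E] [InnerProductSpace ℝ E]
  {m m0 : MeasurableSpace Ω} {μ : Measure Ω}

theorem MeasureTheory.MemLp.integrable_inner {f g : Ω → E} (hf : MemLp f 2 μ)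
    (hg : MemLp g 2 μ) : Integrable (fun ω => ⟪f ω, g ω⟫_ℝ) μ :=
  (L2.integrable_inner (hf.toLp f) (hg.toLp g)).congr <| by
    filter_upwards [hf.coeFn_toLp, hg.coeFn_toLp] with ω hfω hgω
    rw [hfω, hgω]

theorem integral_norm_sub_sq_eq_add_of_integral_inner_eq_zero {f g : Ω → E}
    (hf : MemLp f 2 μ) (hg : MemLp g 2 μ) (hfg : ∫ ω, ⟪f ω, g ω⟫_ℝ ∂μ = 0) :
    ∫ ω, ‖f ω - g ω‖ ^ 2 ∂μ = ∫ ω, ‖f ω‖ ^ 2 ∂μ + ∫ ω, ‖g ω‖ ^ 2 ∂μ := by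
  have hf2 := (memLp_two_iff_integrable_sq_norm hf.1).mp hf
  have hg2 := (memLp_two_iff_integrable_sq_norm hg.1).mp hg
  have hinner := (hf.integrable_inner hg).const_mul 2
  have hsub : Integrable (fun ω => ‖f ω‖ ^ 2 - 2 * ⟪f ω, g ω⟫_ℝ) μ := hf2.sub hinner
  simp_rw [norm_sub_sq_real]
  rw [integral_add hsub hg2, integral_sub hf2 hinner, integral_const_mul, hfg]
  ring

variable [CompleteSpace E] [IsFiniteMeasure μ]

theorem integral_inner_condExp_eq_integral_inner (hm : m ≤ m0) {W U : Ω → E}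
    (hW : MemLp W 2 μ) (hWm : AEStronglyMeasurable[m] W μ) (hU : MemLp U 2 μ) :
    ∫ ω, ⟪W ω, (μ[U|m]) ω⟫_ℝ ∂μ = ∫ ω, ⟪W ω, U ω⟫_ℝ ∂μ := by
  have hL2 := inner_condExpL2_eq_inner_fun (𝕜 := ℝ) hm (hU.toLp U) (hW.toLp W)
    (hWm.congr hW.coeFn_toLp.symm)
  rw [real_inner_comm, real_inner_comm (hW.toLp W), L2.inner_def, L2.inner_def] at hL2
  convert hL2 using 1 <;> refine integral_congr_ae ?_
  · filter_upwards [hU.condExpL2_ae_eq_condExp (𝕜 := ℝ) hm, hW.coeFn_toLp] with ω hUω hWω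
    rw [hUω, hWω]
  · filter_upwards [hU.coeFn_toLp, hW.coeFn_toLp] with ω hUω hWω
    rw [hUω, hWω]

theorem integral_inner_sub_condExp_eq_zero (hm : m ≤ m0) {W U : Ω → E}
    (hW : MemLp W 2 μ) (hWm : AEStronglyMeasurable[m] W μ) (hU : MemLp U 2 μ) :
    ∫ ω, ⟪W ω, U ω - (μ[U|m]) ω⟫_ℝ ∂μ = 0 := by
  simp_rw [inner_sub_right]
  rw [integral_sub (hW.integrable_inner hU) (hW.integrable_inner (hU.condExp one_le_two)),
    sub_eq_zero]
  exact (integral_inner_condExp_eq_integral_inner hm hW hWm hU).symm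

theorem integral_norm_sub_sq_eq_add_condExp (hm : m ≤ m0) {W U : Ω → E}
    (hW : MemLp W 2 μ) (hWm : AEStronglyMeasurable[m] W μ) (hU : MemLp U 2 μ) :
    ∫ ω, ‖W ω - U ω‖ ^ 2 ∂μ
      = ∫ ω, ‖W ω - (μ[U|m]) ω‖ ^ 2 ∂μ + ∫ ω, ‖U ω - (μ[U|m]) ω‖ ^ 2 ∂μ := by
  have hE := hU.condExp (m := m) one_le_two
  have hsplit (ω : Ω) : W ω - U ω = (W ω - (μ[U|m]) ω) - (U ω - (μ[U|m]) ω) :=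
    (sub_sub_sub_cancel_right _ _ _).symm
  simp_rw [hsplit]
  exact integral_norm_sub_sq_eq_add_of_integral_inner_eq_zero (hW.sub hE) (hU.sub hE)
    (integral_inner_sub_condExp_eq_zero hm (hW.sub hE)
      (hWm.sub stronglyMeasurable_condExp.aestronglyMeasurable) hU)

end

/-- Pythagorean decomposition of the conditional flow matching loss:
`E‖v(Y) − U‖² = E‖v(Y) − E[U|Y]‖² + E‖U − E[U|Y]‖²`, so the FM and CFM
objectives differ by a constant independent of `v`. -/
theorem fm_cfm_loss_decomposition
    {Ω : Type*} [MeasurableSpace Ω] (μ : Measure Ω) [IsProbabilityMeasure μ]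
    {m d : ℕ}
    (Y : Ω → EuclideanSpace ℝ (Fin m)) (U : Ω → EuclideanSpace ℝ (Fin d))
    (hY : Measurable Y) (hU : MemLp U 2 μ)
    (v : EuclideanSpace ℝ (Fin m) → EuclideanSpace ℝ (Fin d))
    (hv : Measurable v) (hvY : MemLp (fun ω => v (Y ω)) 2 μ) :
    ∫ ω, ‖v (Y ω) - U ω‖ ^ 2 ∂μ
      = ∫ ω, ‖v (Y ω) - (μ[U | MeasurableSpace.comap Y inferInstance]) ω‖ ^ 2 ∂μ
        + ∫ ω, ‖U ω - (μ[U | MeasurableSpace.comap Y inferInstance]) ω‖ ^ 2 ∂μ :=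
  integral_norm_sub_sq_eq_add_condExp hY.comap_le hvY
    (hv.comp (comap_measurable Y)).aestronglyMeasurable hU
end

section
/- Let U ~ Uniform[0,1] model the exogenous noise. Let f₀, f₁ : [0,1] → ℝ be continuous strictly increasing structural mechanisms and Φ₀, Φ₁ : ℝ → ℝ continuous strictly increasing encoders, and suppose the pushforward of Lebesgue measure restricted to [0,1] under Φ₀ ∘ f₀ equals its pushforward under Φ₁ ∘ f₁. Then for every u ∈ [0,1], every a ∈ {0,1} and every γ ∈ {0,1}: setting z = Φ_a(f_a(u)) (the encoding of the factual outcome f_a(u)), the counterfactual outcome f_γ(u) is the unique real number y with Φ_γ(y) = z; in particular, decoding z with the γ-encoder's inverse recovers the true counterfactual: Φ_γ⁻¹(Φ_a(f_a(u))) = f_γ(u). -/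
/-!
If `U` is uniform on `[a, b]` and `g` is strictly increasing, the law of `g U` gives mass
`u - a` to `(-∞, g u]`. Suppose `g₀ U` and `g₁ U` have the same law but `g₀ u < g₁ u`. By
continuity `g₁` still exceeds `g₀ u` at some `v < u`, so the mass of `(-∞, g₀ u]` under the law
of `g₁ U` is at most `v - a < u - a`. Hence the encoded latents `Φ a ∘ f a` agree on `(0, 1]`,
and at `0` by continuity, and decoding with the injective `Φ γ` recovers `f γ u`.
-/

open MeasureTheory Set Filter Topology

namespace StrictMonoOn

variable {a b u : ℝ} {g g₀ g₁ : ℝ → ℝ}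

theorem map_restrict_Icc_Iic (hg : StrictMonoOn g (Icc a b))
    (hgm : AEMeasurable g (volume.restrict (Icc a b))) (hu : u ∈ Icc a b) :
    (volume.restrict (Icc a b)).map g (Iic (g u)) = ENNReal.ofReal (u - a) := by
  have hpre : g ⁻¹' Iic (g u) ∩ Icc a b = Icc a u := by
    ext v
    refine ⟨fun ⟨hvu, hv⟩ ↦ ⟨hv.1, (hg.le_iff_le hv hu).mp hvu⟩, fun hv ↦ ?_⟩
    have hv' : v ∈ Icc a b := ⟨hv.1, hv.2.trans hu.2⟩
    exact ⟨(hg.le_iff_le hv' hu).mpr hv.2, hv'⟩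
  rw [Measure.map_apply_of_aemeasurable hgm measurableSet_Iic,
    Measure.restrict_apply' measurableSet_Icc, hpre, Real.volume_Icc]

theorem le_of_map_restrict_Icc_eq (hg₀ : StrictMonoOn g₀ (Icc a b))
    (hg₁ : StrictMonoOn g₁ (Icc a b))
    (hg₀m : AEMeasurable g₀ (volume.restrict (Icc a b)))
    (hg₁m : AEMeasurable g₁ (volume.restrict (Icc a b)))
    (hg₁c : ContinuousWithinAt g₁ (Icc a b) u)
    (h : (volume.restrict (Icc a b)).map g₀ = (volume.restrict (Icc a b)).map g₁)
    (hu : u ∈ Ioc a b) : g₁ u ≤ g₀ u := by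
  by_contra! hlt
  have hu' : u ∈ Icc a b := Ioc_subset_Icc_self hu
  have := right_nhdsWithin_Ico_neBot hu.1
  obtain ⟨v, hgv, hv⟩ : ∃ v, g₀ u < g₁ v ∧ v ∈ Ico a u :=
    (((hg₁c.mono (Ico_subset_Icc_self.trans (Icc_subset_Icc_right hu.2))).eventually
      (lt_mem_nhds hlt)).and self_mem_nhdsWithin).exists
  have hv' : v ∈ Icc a b := ⟨hv.1, hv.2.le.trans hu.2⟩
  have hsub : g₁ ⁻¹' Iic (g₀ u) ∩ Icc a b ⊆ Icc a v := by
    refine fun x ⟨hx, hxI⟩ ↦ ⟨hxI.1, ?_⟩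
    by_contra! hvx
    exact absurd (hgv.trans (hg₁ hv' hxI hvx)) (not_lt.mpr hx)
  have hmass : ENNReal.ofReal (u - a) ≤ ENNReal.ofReal (v - a) :=
    calc ENNReal.ofReal (u - a)
        = (volume.restrict (Icc a b)).map g₁ (Iic (g₀ u)) := by
          rw [← h, hg₀.map_restrict_Icc_Iic hg₀m hu']
      _ = volume (g₁ ⁻¹' Iic (g₀ u) ∩ Icc a b) := by
          rw [Measure.map_apply_of_aemeasurable hg₁m measurableSet_Iic,
            Measure.restrict_apply' measurableSet_Icc]
      _ ≤ volume (Icc a v) := measure_mono hsub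
      _ = ENNReal.ofReal (v - a) := Real.volume_Icc
  have := (ENNReal.ofReal_le_ofReal_iff (by linarith [hv.1])).mp hmass
  linarith [hv.2]

theorem eqOn_of_map_restrict_Icc_eq (hab : a < b)
    (hg₀ : StrictMonoOn g₀ (Icc a b)) (hg₁ : StrictMonoOn g₁ (Icc a b))
    (hg₀c : ContinuousOn g₀ (Icc a b)) (hg₁c : ContinuousOn g₁ (Icc a b))
    (h : (volume.restrict (Icc a b)).map g₀ = (volume.restrict (Icc a b)).map g₁) :
    EqOn g₀ g₁ (Icc a b) := by
  have hg₀m : AEMeasurable g₀ (volume.restrict (Icc a b)) :=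
    hg₀c.aemeasurable measurableSet_Icc
  have hg₁m : AEMeasurable g₁ (volume.restrict (Icc a b)) :=
    hg₁c.aemeasurable measurableSet_Icc
  have hIoc : EqOn g₀ g₁ (Ioc a b) := fun u hu ↦ le_antisymm
    (hg₁.le_of_map_restrict_Icc_eq hg₀ hg₁m hg₀m (hg₀c u (Ioc_subset_Icc_self hu))
      h.symm hu)
    (hg₀.le_of_map_restrict_Icc_eq hg₁ hg₀m hg₁m (hg₁c u (Ioc_subset_Icc_self hu)) h hu)
  exact hIoc.of_subset_closure hg₀c hg₁c Ioc_subset_Icc_self (closure_Ioc hab.ne).ge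

end StrictMonoOn

/-- Corollary 1 (counterfactual recovery under monotone SCMs), univariate
setting with treatments indexed by `Bool`: if the encoded latents
`Φ a ∘ f a` of a `Uniform[0,1]` noise have the same distribution under both
treatments, then for each `u ∈ [0,1]` and treatments `a, γ`, the counterfactual
outcome `f γ u` is the unique real `y` with `Φ γ y = Φ a (f a u)`; hence
decoding the factual encoding `z = Φ a (f a u)` with the `γ`-encoder's inverse
recovers the true counterfactual. -/
theorem counterfactual_recovery
    (f Φ : Bool → ℝ → ℝ)
    (hfc : ∀ a, ContinuousOn (f a) (Set.Icc 0 1))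
    (hfm : ∀ a, StrictMonoOn (f a) (Set.Icc 0 1))
    (hΦc : ∀ a, Continuous (Φ a)) (hΦm : ∀ a, StrictMono (Φ a))
    (h : (volume.restrict (Set.Icc (0:ℝ) 1)).map (fun u => Φ false (f false u))
        = (volume.restrict (Set.Icc (0:ℝ) 1)).map (fun u => Φ true (f true u))) :
    ∀ u ∈ Set.Icc (0:ℝ) 1, ∀ a γ : Bool,
      (∀ y : ℝ, Φ γ y = Φ a (f a u) ↔ y = f γ u) := by
  intro u hu a γ y
  have hlatent : EqOn (fun u ↦ Φ false (f false u)) (fun u ↦ Φ true (f true u)) (Icc 0 1) :=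
    StrictMonoOn.eqOn_of_map_restrict_Icc_eq zero_lt_one
      ((hΦm false).comp_strictMonoOn (hfm false)) ((hΦm true).comp_strictMonoOn (hfm true))
      ((hΦc false).comp_continuousOn (hfc false)) ((hΦc true).comp_continuousOn (hfc true)) h
  have hinvariant : ∀ c, Φ c (f c u) = Φ false (f false u) := by
    rintro (_ | _)
    exacts [rfl, (hlatent hu).symm]
  rw [hinvariant a, ← hinvariant γ]
  exact (hΦm γ).injective.eq_iff
end

section
/- Let d ≥ 1, let v : ℝᵈ × ℝ → ℝᵈ be continuously differentiable, and let p : ℝᵈ × ℝ → ℝ be continuously differentiable with p(y, t) > 0 for all (y, t). Suppose p and v satisfy the continuity (Liouville) equation ∂ₜ p(y, t) + div_y (p(y, t) v(y, t)) = 0 for all (y, t), where div_y denotes the divergence in the spatial variable. Let y : ℝ → ℝᵈ be differentiable with y′(t) = v(y(t), t) for all t. Then the function t ↦ log p(y(t), t) is differentiable and (d/dt) log p(y(t), t) = − div_y v(y(t), t), where div_y v(y, t) = Σᵢ ∂ v_i / ∂ y_i evaluated at (y, t). -/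
/-- The divergence (in the spatial variable) of a vector field
`w : ℝᵈ → ℝᵈ` at a point `x`: `∑ i, ∂ wᵢ / ∂ xᵢ`. -/
noncomputable def divergence {d : ℕ} (w : (Fin d → ℝ) → (Fin d → ℝ))
    (x : Fin d → ℝ) : ℝ :=
  ∑ i, fderiv ℝ w x (Pi.single i 1) i

/-!
Along the trajectory, the chain rule gives the material derivative
`d/dt p(y(t), t) = ∂ₜp + ∇ₓp · v`, and the product rule `div (p v) = p div v + ∇ₓp · v` turns
the continuity equation into `d/dt p(y(t), t) = -p div v`; dividing by `p > 0` gives the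
derivative of `log p`.
-/

open ContinuousLinearMap

theorem ContinuousLinearMap.apply_eq_sum_mul_single {ι : Type*} [Fintype ι] [DecidableEq ι]
    (L : (ι → ℝ) →L[ℝ] ℝ) (w : ι → ℝ) : L w = ∑ i, w i * L (Pi.single i 1) := by
  conv_lhs => rw [← Finset.univ_sum_single w]
  simp only [map_sum]
  refine Finset.sum_congr rfl fun i _ => ?_
  rw [← smul_eq_mul, ← map_smul, ← Pi.single_smul', smul_eq_mul, mul_one]

theorem divergence_smul {d : ℕ} {f : (Fin d → ℝ) → ℝ} {w : (Fin d → ℝ) → (Fin d → ℝ)}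
    {x : Fin d → ℝ} (hf : DifferentiableAt ℝ f x) (hw : DifferentiableAt ℝ w x) :
    divergence (fun x' => f x' • w x') x = f x * divergence w x + fderiv ℝ f x (w x) := by
  simp only [divergence, fderiv_fun_smul hf hw, add_apply, smul_apply, smulRight_apply,
    Pi.add_apply, Pi.smul_apply, smul_eq_mul, Finset.sum_add_distrib, ← Finset.mul_sum,
    (fderiv ℝ f x).apply_eq_sum_mul_single (w x), mul_comm (w x _)]

theorem DifferentiableAt.hasDerivAt_comp_graph {E F : Type*} [NormedAddCommGroup E]
    [NormedSpace ℝ E] [NormedAddCommGroup F] [NormedSpace ℝ F] {p : E × ℝ → F} {γ : ℝ → E}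
    {γ' : E} {t : ℝ} (hp : DifferentiableAt ℝ p (γ t, t)) (hγ : HasDerivAt γ γ' t) :
    HasDerivAt (fun s => p (γ s, s))
      (fderiv ℝ (fun x => p (x, t)) (γ t) γ' + deriv (fun s => p (γ t, s)) t) t := by
  have hspace : fderiv ℝ (fun x => p (x, t)) (γ t) = (fderiv ℝ p (γ t, t)).comp (inl ℝ E ℝ) :=
    (hp.hasFDerivAt.comp (γ t) (hasFDerivAt_prodMk_left (γ t) t)).fderiv
  have htime : deriv (fun s => p (γ t, s)) t = fderiv ℝ p (γ t, t) (0, 1) :=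
    (hp.hasFDerivAt.comp_hasDerivAt t ((hasDerivAt_const t (γ t)).prodMk (hasDerivAt_id t))).deriv
  rw [hspace, htime, comp_apply, inl_apply, ← map_add, Prod.mk_add_mk, add_zero, zero_add]
  exact hp.hasFDerivAt.comp_hasDerivAt (f := fun s => (γ s, s)) t (hγ.prodMk (hasDerivAt_id t))

theorem hasDerivAt_density_along_flow {d : ℕ} {v : (Fin d → ℝ) × ℝ → (Fin d → ℝ)}
    {p : (Fin d → ℝ) × ℝ → ℝ} {y : ℝ → Fin d → ℝ} {t : ℝ}
    (hv : DifferentiableAt ℝ v (y t, t)) (hp : DifferentiableAt ℝ p (y t, t))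
    (hLiouville : deriv (fun s => p (y t, s)) t
        + divergence (fun x => p (x, t) • v (x, t)) (y t) = 0)
    (hy : HasDerivAt y (v (y t, t)) t) :
    HasDerivAt (fun s => p (y s, s))
      (-(p (y t, t) * divergence (fun x => v (x, t)) (y t))) t := by
  have hslice {G : Type} [NormedAddCommGroup G] [NormedSpace ℝ G] {f : (Fin d → ℝ) × ℝ → G}
      (hf : DifferentiableAt ℝ f (y t, t)) : DifferentiableAt ℝ (fun x => f (x, t)) (y t) :=
    hf.comp (y t) (hasFDerivAt_prodMk_left (y t) t).differentiableAt
  rw [divergence_smul (hslice hp) (hslice hv)] at hLiouville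
  exact (hp.hasDerivAt_comp_graph hy).congr_deriv (by linarith)

theorem log_density_deriv_along_flow_general
    {d : ℕ}
    (v : (Fin d → ℝ) × ℝ → (Fin d → ℝ)) (hv : ContDiff ℝ 1 v)
    (p : (Fin d → ℝ) × ℝ → ℝ) (hp : ContDiff ℝ 1 p)
    (hppos : ∀ z, 0 < p z)
    (hLiouville : ∀ (x : Fin d → ℝ) (t : ℝ),
      deriv (fun s => p (x, s)) t
        + divergence (fun x' => p (x', t) • v (x', t)) x = 0)
    (y : ℝ → Fin d → ℝ) (hy : ∀ t, HasDerivAt y (v (y t, t)) t) :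
    ∀ t, HasDerivAt (fun s => Real.log (p (y s, s)))
      (-(divergence (fun x => v (x, t)) (y t))) t := by
  intro t
  have hdensity := hasDerivAt_density_along_flow (hv.differentiable one_ne_zero _)
    (hp.differentiable one_ne_zero _) (hLiouville (y t) t) (hy t)
  convert hdensity.log (hppos _).ne' using 1
  field_simp [(hppos (y t, t)).ne']

/-- Along a trajectory of the ODE `dy/dt = v(y(t), t)`, if `p > 0` is `C¹` and
satisfies the continuity (Liouville) equation
`∂ₜ p + div_y (p v) = 0`, then
`(d/dt) log p(y(t), t) = − div_y v(y(t), t)`. -/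
theorem log_density_deriv_along_flow
    {d : ℕ} (hd : 1 ≤ d)
    (v : (Fin d → ℝ) × ℝ → (Fin d → ℝ)) (hv : ContDiff ℝ 1 v)
    (p : (Fin d → ℝ) × ℝ → ℝ) (hp : ContDiff ℝ 1 p)
    (hppos : ∀ z, 0 < p z)
    (hLiouville : ∀ (x : Fin d → ℝ) (t : ℝ),
      deriv (fun s => p (x, s)) t
        + divergence (fun x' => p (x', t) • v (x', t)) x = 0)
    (y : ℝ → Fin d → ℝ) (hy : ∀ t, HasDerivAt y (v (y t, t)) t) :
    ∀ t, HasDerivAt (fun s => Real.log (p (y s, s)))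
      (-(divergence (fun x => v (x, t)) (y t))) t :=
  log_density_deriv_along_flow_general v hv p hp hppos hLiouville y hy
end
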